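/- arXiv:1702.04464 — 4 statements merged into one kernel-verified Lean document; each statement's English description precedes it below -/
import Mathlib

section
/- Let f be nonnegative and Riemann integrable on [a,b], and for each n let d_{n,1}, …, d_{n,n} be nonnegative reals such that max_{1≤k≤n} d_{n,k} / n → 0 as n → ∞. Then lim_{n→∞} Σ_{k=1}^{n} f(a + (k/n)(b−a)) · (b−a)/(n + d_{n,k}) = ∫_a^b f(x) dx. -/
/-!
Since `(b - a) / n - (b - a) / (n + d) ≤ (d / n) * ((b - a) / n)` and `f ≥ 0`, each term of the
disturbed sum differs from the corresponding term of the right-endpoint Riemann sum `Sₙ` by at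
most `ε` times that term once `max_k d_{n,k} / n < ε`. Hence the two sums differ by at most
`ε Sₙ`, and `Sₙ → I` because the uniform partitions have mesh `(b - a) / n → 0`.
-/

open Filter Finset Real

/-- `f` is Riemann integrable on `[a,b]` with Riemann integral `I`:
for every `ε > 0` there is `δ > 0` such that every tagged partition
`a = x 0 < x 1 < … < x n = b` with mesh `< δ` and tags `ξ k ∈ [x (k-1), x k]`
has Riemann sum within `ε` of `I`. -/
def IsRiemannIntegral (f : ℝ → ℝ) (a b I : ℝ) : Prop :=
  ∀ ε > 0, ∃ δ > 0, ∀ (n : ℕ) (x ξ : ℕ → ℝ),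
    0 < n → x 0 = a → x n = b →
    (∀ k ∈ Finset.Icc 1 n, x (k - 1) < x k) →
    (∀ k ∈ Finset.Icc 1 n, x k - x (k - 1) < δ) →
    (∀ k ∈ Finset.Icc 1 n, ξ k ∈ Set.Icc (x (k - 1)) (x k)) →
    |(∑ k ∈ Finset.Icc 1 n, f (ξ k) * (x k - x (k - 1))) - I| < ε

open Topology

theorem tendsto_sum_of_abs_sub_le_mul {ι : Type*} {s : ℕ → Finset ι} {v w : ℕ → ι → ℝ}
    {I : ℝ} (hw : Tendsto (fun n => ∑ k ∈ s n, w n k) atTop (𝓝 I))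
    (hvw : ∀ ε > 0, ∀ᶠ n in atTop, ∀ k ∈ s n, |v n k - w n k| ≤ ε * w n k) :
    Tendsto (fun n => ∑ k ∈ s n, v n k) atTop (𝓝 I) := by
  set M := |I| + 1
  have hM : 0 < M := by positivity
  have hdiff : Tendsto (fun n => ∑ k ∈ s n, v n k - ∑ k ∈ s n, w n k) atTop (𝓝 0) := by
    refine Metric.tendsto_nhds.2 fun ε hε => ?_
    have hbound : ∀ᶠ n in atTop, ∑ k ∈ s n, w n k < M :=
      hw.eventually (gt_mem_nhds (by linarith [le_abs_self I]))
    filter_upwards [hbound, hvw (ε / M) (by positivity)] with n hn hvwn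
    calc dist (∑ k ∈ s n, v n k - ∑ k ∈ s n, w n k) 0
        = |∑ k ∈ s n, (v n k - w n k)| := by rw [Real.dist_0_eq_abs, sum_sub_distrib]
      _ ≤ ∑ k ∈ s n, ε / M * w n k := (abs_sum_le_sum_abs _ _).trans (sum_le_sum hvwn)
      _ = ε / M * ∑ k ∈ s n, w n k := (mul_sum _ _ _).symm
      _ < ε / M * M := by gcongr
      _ = ε := div_mul_cancel₀ ε hM.ne'
  simpa using hw.add hdiff

theorem add_natCast_div_mul_sub_mem_Icc {a b : ℝ} (hab : a ≤ b) {k n : ℕ} (hk : k ≤ n) :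
    a + (k : ℝ) / n * (b - a) ∈ Set.Icc a b := by
  have h0 : 0 ≤ (k : ℝ) / n := by positivity
  have h1 : (k : ℝ) / n ≤ 1 := div_le_one_of_le₀ (by exact_mod_cast hk) (Nat.cast_nonneg n)
  constructor <;> nlinarith

theorem add_natCast_div_mul_sub_sub_pred {a b : ℝ} {k : ℕ} (n : ℕ) (hk : 1 ≤ k) (hn : 0 < n) :
    (a + (k : ℝ) / n * (b - a)) - (a + ((k - 1 : ℕ) : ℝ) / n * (b - a)) = (b - a) / n := by
  rw [Nat.cast_sub hk]
  field_simp
  ring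

theorem IsRiemannIntegral.tendsto_rightEndpointSum {f : ℝ → ℝ} {a b I : ℝ} (hab : a < b)
    (hf : IsRiemannIntegral f a b I) :
    Tendsto (fun n : ℕ => ∑ k ∈ Icc 1 n, f (a + (k : ℝ) / n * (b - a)) * ((b - a) / n))
      atTop (𝓝 I) := by
  refine Metric.tendsto_nhds.2 fun ε hε => ?_
  obtain ⟨δ, hδ, H⟩ := hf ε hε
  have hmesh : ∀ᶠ n : ℕ in atTop, (b - a) / n < δ :=
    (tendsto_const_div_atTop_nhds_zero_nat (b - a)).eventually (gt_mem_nhds hδ)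
  filter_upwards [hmesh, eventually_gt_atTop 0] with n hmesh hn
  set x : ℕ → ℝ := fun k => a + (k : ℝ) / n * (b - a)
  have hstep : ∀ k ∈ Icc 1 n, x k - x (k - 1) = (b - a) / n := fun k hk =>
    add_natCast_div_mul_sub_sub_pred n (mem_Icc.1 hk).1 hn
  have hmono : ∀ k ∈ Icc 1 n, x (k - 1) < x k := fun k hk => by
    have : 0 < x k - x (k - 1) := by
      rw [hstep k hk]; exact div_pos (sub_pos.2 hab) (by positivity)
    linarith
  have hsum := H n x x hn (by simp [x]) (by simp [x, hn.ne']) hmono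
    (fun k hk => (hstep k hk).symm ▸ hmesh) (fun k hk => Set.right_mem_Icc.2 (hmono k hk).le)
  rwa [sum_congr rfl fun k hk => by rw [hstep k hk], ← Real.dist_eq] at hsum

theorem abs_div_add_sub_div_le {c n d : ℝ} (hc : 0 ≤ c) (hn : 0 < n) (hd : 0 ≤ d) :
    |c / (n + d) - c / n| ≤ d / n * (c / n) := by
  have hle : c / (n + d) ≤ c / n := by gcongr; linarith
  rw [abs_of_nonpos (sub_nonpos.2 hle), neg_sub, div_sub_div _ _ hn.ne' (by linarith)]
  calc (c * (n + d) - n * c) / (n * (n + d)) = c * d / (n * (n + d)) := by ring_nf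
    _ ≤ c * d / (n * n) := by gcongr; linarith
    _ = d / n * (c / n) := by ring

theorem disturbing_mesh (f : ℝ → ℝ) (a b I : ℝ) (hab : a < b)
    (hf : IsRiemannIntegral f a b I)
    (hpos : ∀ x ∈ Set.Icc a b, 0 ≤ f x)
    (d : ℕ → ℕ → ℝ)
    (hd0 : ∀ n : ℕ, ∀ k ∈ Finset.Icc 1 n, 0 ≤ d n k)
    (hd : ∀ ε > 0, ∃ N : ℕ, ∀ n ≥ N, ∀ k ∈ Finset.Icc 1 n, d n k / n < ε) :
    Tendsto (fun n : ℕ =>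
      ∑ k ∈ Finset.Icc 1 n, f (a + (k : ℝ) / n * (b - a)) * ((b - a) / (n + d n k)))
      atTop (nhds I) := by
  refine tendsto_sum_of_abs_sub_le_mul (hf.tendsto_rightEndpointSum hab) fun ε hε => ?_
  obtain ⟨N, hN⟩ := hd ε hε
  filter_upwards [eventually_ge_atTop N] with n hn k hk
  have hn0 : (0 : ℝ) < n := by exact_mod_cast (mem_Icc.1 hk).1.trans (mem_Icc.1 hk).2
  have hfk := hpos _ (add_natCast_div_mul_sub_mem_Icc hab.le (mem_Icc.1 hk).2)
  calc |f (a + k / n * (b - a)) * ((b - a) / (n + d n k)) - f (a + k / n * (b - a)) * ((b - a) / n)|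
      = f (a + k / n * (b - a)) * |(b - a) / (n + d n k) - (b - a) / n| := by
        rw [← mul_sub, abs_mul, abs_of_nonneg hfk]
    _ ≤ f (a + k / n * (b - a)) * (d n k / n * ((b - a) / n)) := by
        gcongr; exact abs_div_add_sub_div_le (sub_pos.2 hab).le hn0 (hd0 n k hk)
    _ ≤ f (a + k / n * (b - a)) * (ε * ((b - a) / n)) := by
        gcongr
        exact (hN n hn k hk).le
    _ = ε * (f (a + k / n * (b - a)) * ((b - a) / n)) := by ring
end

section
/- Let f be nonnegative and Riemann integrable on [a,b]. Suppose there exist constants C > 0 and p < 1 such that 0 ≤ d_{n,k} ≤ C·n^p for all n and 1 ≤ k ≤ n. Then lim_{n→∞} Σ_{k=1}^{n} f(a + (k/n)(b−a)) · (b−a)/(n + d_{n,k}) = ∫_a^b f(x) dx. -/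
open Filter Finset Real

theorem disturbing_mesh_bigO (f : ℝ → ℝ) (a b I : ℝ) (hab : a < b)
    (hf : IsRiemannIntegral f a b I)
    (hpos : ∀ x ∈ Set.Icc a b, 0 ≤ f x)
    (d : ℕ → ℕ → ℝ) (C p : ℝ) (hC : 0 < C) (hp : p < 1)
    (hd0 : ∀ n : ℕ, ∀ k ∈ Finset.Icc 1 n, 0 ≤ d n k)
    (hdb : ∀ n : ℕ, ∀ k ∈ Finset.Icc 1 n, d n k ≤ C * (n : ℝ) ^ p) :
    Tendsto (fun n : ℕ =>
      ∑ k ∈ Finset.Icc 1 n, f (a + (k : ℝ) / n * (b - a)) * ((b - a) / (n + d n k)))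
      atTop (nhds I) := by
  set S : ℕ → ℝ := fun n =>
    ∑ k ∈ Finset.Icc 1 n, f (a + (k : ℝ) / n * (b - a)) * ((b - a) / (n + d n k)) with hS
  set R : ℕ → ℝ := fun n =>
    ∑ k ∈ Finset.Icc 1 n, f (a + (k : ℝ) / n * (b - a)) * ((b - a) / n) with hR
  have hba : (0:ℝ) < b - a := by linarith
  -- tags lie in [a,b]
  have hmem : ∀ n : ℕ, ∀ k ∈ Finset.Icc 1 n, a + (k : ℝ) / n * (b - a) ∈ Set.Icc a b := by
    intro n k hk
    simp only [Finset.mem_Icc] at hk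
    have hn : (0:ℝ) < n := by exact_mod_cast Nat.lt_of_lt_of_le hk.1 hk.2
    have h1 : 0 ≤ (k:ℝ) / n := by positivity
    have h2 : (k:ℝ) / n ≤ 1 := by
      rw [div_le_one hn]; exact_mod_cast hk.2
    constructor
    · nlinarith
    · nlinarith
  -- R tends to I
  have hRI : Tendsto R atTop (nhds I) := by
    rw [Metric.tendsto_atTop]
    intro ε hε
    obtain ⟨δ, hδ, H⟩ := hf ε hε
    obtain ⟨N, hN⟩ : ∃ N : ℕ, (b - a) / δ < N := exists_nat_gt _
    refine ⟨N + 1, fun n hn => ?_⟩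
    have hn1 : 1 ≤ n := le_trans (Nat.le_add_left 1 N) hn
    have hnpos : (0:ℝ) < n := by exact_mod_cast hn1
    have hmesh : (b - a) / n < δ := by
      rw [div_lt_iff₀ hnpos]
      have h' : (b - a) / δ < n := lt_of_lt_of_le hN (by exact_mod_cast le_trans (Nat.le_succ N) hn)
      have := (div_lt_iff₀ hδ).mp h'
      nlinarith
    set x : ℕ → ℝ := fun k => a + (k : ℝ) / n * (b - a) with hx
    have hdiff : ∀ k ∈ Finset.Icc 1 n, x k - x (k - 1) = (b - a) / n := by
      intro k hk
      simp only [Finset.mem_Icc] at hk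
      have : ((k - 1 : ℕ) : ℝ) = (k : ℝ) - 1 := by
        have := hk.1; push_cast [Nat.cast_sub this]; ring
      simp only [hx, this]
      field_simp
      ring
    clear_value x
    have key := H n x x hn1 (by simp [hx]) (by simp [hx, div_self hnpos.ne']) ?_ ?_ ?_
    · rw [Real.dist_eq]
      have : R n = ∑ k ∈ Finset.Icc 1 n, f (x k) * (x k - x (k - 1)) :=
        Finset.sum_congr rfl fun k hk => by rw [hdiff k hk, hx]
      rw [this]
      exact key
    · intro k hk
      rw [show x k = x (k-1) + (x k - x (k-1)) by ring, hdiff k hk]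
      have : 0 < (b - a)/n := by positivity
      linarith
    · intro k hk; rw [hdiff k hk]; exact hmesh
    · intro k hk
      have h := hdiff k hk
      have hq : 0 < (b - a) / (n:ℝ) := div_pos hba hnpos
      exact ⟨by linarith, le_refl _⟩
  -- 0 ≤ R n - S n
  have hle : ∀ n : ℕ, 0 ≤ R n - S n := by
    intro n
    rw [hR, hS, ← Finset.sum_sub_distrib]
    apply Finset.sum_nonneg
    intro k hk
    rw [← mul_sub]
    have hk' := hk
    simp only [Finset.mem_Icc] at hk'
    have hnpos : (0:ℝ) < n := by exact_mod_cast Nat.lt_of_lt_of_le hk'.1 hk'.2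
    have hd := hd0 n k hk
    apply mul_nonneg (hpos _ (hmem n k hk))
    have : (b - a) / (n + d n k) ≤ (b - a) / n := by gcongr; linarith
    linarith
  -- upper bound
  have hub : ∀ n : ℕ, 1 ≤ n → R n - S n ≤ C * (n:ℝ) ^ (p - 1) * R n := by
    intro n hn
    have hnpos : (0:ℝ) < n := by exact_mod_cast hn
    rw [hR, hS, ← Finset.sum_sub_distrib, Finset.mul_sum]
    apply Finset.sum_le_sum
    intro k hk
    have hfk := hpos _ (hmem n k hk)
    have hdk := hd0 n k hk
    have hdb' := hdb n k hk
    rw [← mul_sub, ← mul_assoc, mul_comm (C * (n:ℝ) ^ (p-1)), mul_assoc]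
    apply mul_le_mul_of_nonneg_left _ hfk
    have h1 : (b - a) / ↑n - (b - a) / (↑n + d n k) = (b - a) * d n k / (n * (n + d n k)) := by
      field_simp
      ring
    rw [h1]
    have h2 : (b - a) * d n k / (n * (n + d n k)) ≤ (b - a) * (C * (n:ℝ)^p) / (n * n) := by
      gcongr
      · linarith
    calc (b - a) * d n k / (n * (n + d n k)) ≤ (b - a) * (C * (n:ℝ)^p) / (n * n) := h2
      _ = C * (n:ℝ)^(p-1) * ((b-a)/n) := by
          rw [Real.rpow_sub hnpos, Real.rpow_one]
          field_simp
  -- RHS tends to 0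
  have h0 : Tendsto (fun n : ℕ => C * (n:ℝ) ^ (p - 1) * R n) atTop (nhds 0) := by
    have h1 : Tendsto (fun x : ℝ => x ^ (p - 1)) atTop (nhds 0) := by
      have := tendsto_rpow_neg_atTop (y := 1 - p) (by linarith)
      simpa using this
    have hp' : Tendsto (fun n : ℕ => (n:ℝ) ^ (p - 1)) atTop (nhds 0) :=
      h1.comp tendsto_natCast_atTop_atTop
    have h2 := (hp'.const_mul C).mul hRI
    rw [mul_zero, zero_mul] at h2
    exact h2
  have hdiff0 : Tendsto (fun n => R n - S n) atTop (nhds 0) := by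
    apply tendsto_of_tendsto_of_tendsto_of_le_of_le' tendsto_const_nhds h0
    · exact Eventually.of_forall hle
    · filter_upwards [eventually_ge_atTop 1] with n hn using hub n hn
  have := hRI.sub hdiff0
  simpa using this
end

section
/- Let f be nonnegative and Riemann integrable on [a,b], let d_{n,k} ≥ 0 satisfy (max_{1≤k≤n} d_{n,k})/n → 0, and let K : ℕ → ℕ satisfy K(n)/n → 0 (with K(n) ≤ n). Then lim_{n→∞} Σ_{k=K(n)+1}^{n} f(a + (k/n)(b−a)) · (b−a)/(n + d_{n,k}) = ∫_a^b f(x) dx. -/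
open Filter Finset Real

/-! Riemann integrability of `f` gives two facts about the uniform partitions `x k = a + k (b-a)/n`:
their right-endpoint sums `R n` tend to `I`, and `f` is bounded, `|f| ≤ M` on `[a,b]`. The
given sum differs from `R n` by the `K n` deleted terms, of total size at most `M (b-a) K n / n`,
and by the change of widths `(b-a)/n - (b-a)/(n+d) = (b-a)/n · d/(n+d) ≤ (b-a)/n · d/n`, of
total size at most `M (b-a) max_k d n k / n`. Both bounds tend to `0`. -/

noncomputable def uniformNode (a b : ℝ) (n k : ℕ) : ℝ := a + k / n * (b - a)

section uniformNode

variable {a b : ℝ} {n k : ℕ}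

@[simp] lemma uniformNode_zero : uniformNode a b n 0 = a := by simp [uniformNode]

lemma uniformNode_self (hn : n ≠ 0) : uniformNode a b n n = b := by
  simp [uniformNode, hn]

lemma uniformNode_sub_pred (hk : 1 ≤ k) :
    uniformNode a b n k - uniformNode a b n (k - 1) = (b - a) / n := by
  simp only [uniformNode, Nat.cast_sub hk, Nat.cast_one]
  ring

lemma uniformNode_mono (hab : a ≤ b) : Monotone (uniformNode a b n) := by
  intro k l hkl
  unfold uniformNode
  gcongr

lemma uniformNode_mem_Icc (hab : a ≤ b) (hk : k ≤ n) : uniformNode a b n k ∈ Set.Icc a b := by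
  rcases Nat.eq_zero_or_pos n with rfl | hn
  · simpa [Nat.le_zero.mp hk] using hab
  · constructor
    · simpa using uniformNode_mono (n := n) hab k.zero_le
    · simpa [uniformNode_self hn.ne'] using uniformNode_mono (n := n) hab hk

lemma exists_mem_Icc_uniformNode (hab : a < b) (hn : n ≠ 0) {t : ℝ} (ht : t ∈ Set.Icc a b) :
    ∃ j ∈ Icc 1 n, t ∈ Set.Icc (uniformNode a b n (j - 1)) (uniformNode a b n j) := by
  have hba : 0 < b - a := sub_pos.mpr hab
  have hnR : (0 : ℝ) < n := by positivity
  set c := (t - a) / (b - a) * n with hc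
  have ht_eq : t = a + c / n * (b - a) := by rw [hc]; field_simp; ring
  have hc0 : 0 ≤ c := mul_nonneg (div_nonneg (by linarith [ht.1]) hba.le) hnR.le
  have hcn : c ≤ n := by
    rw [hc]; apply mul_le_of_le_one_left hnR.le; rw [div_le_one hba]; linarith [ht.2]
  refine ⟨max 1 ⌈c⌉₊, mem_Icc.mpr ⟨le_max_left _ _, max_le (Nat.one_le_iff_ne_zero.mpr hn)
    (Nat.ceil_le.mpr hcn)⟩, ?_⟩
  have hj : (max 1 ⌈c⌉₊ - 1 : ℕ) ≤ c ∧ c ≤ (max 1 ⌈c⌉₊ : ℕ) := by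
    rcases Nat.eq_zero_or_pos ⌈c⌉₊ with h0 | h0
    · simp only [h0, zero_le, sup_of_le_left, tsub_self, CharP.cast_eq_zero, Nat.cast_one]
      exact ⟨hc0, by linarith [Nat.ceil_eq_zero.mp h0]⟩
    · rw [max_eq_right h0, Nat.cast_sub h0, Nat.cast_one]
      exact ⟨by linarith [Nat.ceil_lt_add_one hc0], Nat.le_ceil c⟩
  simp only [uniformNode, ht_eq]
  constructor <;> gcongr
  exacts [hj.1, hj.2]

end uniformNode

namespace IsRiemannIntegral

variable {f : ℝ → ℝ} {a b I : ℝ}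

lemma eventually_abs_uniform_sum_sub_lt (hab : a < b) (hf : IsRiemannIntegral f a b I)
    {ε : ℝ} (hε : 0 < ε) :
    ∀ᶠ n : ℕ in atTop, ∀ ξ : ℕ → ℝ,
      (∀ k ∈ Icc 1 n, ξ k ∈ Set.Icc (uniformNode a b n (k - 1)) (uniformNode a b n k)) →
      |∑ k ∈ Icc 1 n, f (ξ k) * ((b - a) / n) - I| < ε := by
  obtain ⟨δ, hδ, H⟩ := hf ε hε
  have hmesh : ∀ᶠ n : ℕ in atTop, (b - a) / n < δ :=
    (tendsto_const_div_atTop_nhds_zero_nat (b - a)).eventually (gt_mem_nhds hδ)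
  filter_upwards [hmesh, eventually_ge_atTop 1] with n hn hn1 ξ hξ
  have hwidth : ∀ k ∈ Icc 1 n, uniformNode a b n k - uniformNode a b n (k - 1) = (b - a) / n :=
    fun k hk => uniformNode_sub_pred (mem_Icc.mp hk).1
  have hwidth_pos : (0 : ℝ) < (b - a) / n := div_pos (sub_pos.mpr hab) (by exact_mod_cast hn1)
  have := H n (uniformNode a b n) ξ hn1 uniformNode_zero (uniformNode_self (by omega))
    (fun k hk => sub_pos.mp (hwidth k hk ▸ hwidth_pos)) (fun k hk => hwidth k hk ▸ hn) hξ
  rwa [sum_congr rfl fun k hk => by rw [hwidth k hk]] at this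

lemma tendsto_uniform_sum (hab : a < b) (hf : IsRiemannIntegral f a b I) :
    Tendsto (fun n : ℕ => ∑ k ∈ Icc 1 n, f (uniformNode a b n k) * ((b - a) / n)) atTop
      (nhds I) := by
  refine Metric.tendsto_nhds.mpr fun ε hε => ?_
  filter_upwards [hf.eventually_abs_uniform_sum_sub_lt hab hε] with n hn
  exact hn _ fun k _ => ⟨uniformNode_mono hab.le (Nat.sub_le k 1), le_rfl⟩

/-- Moving one tag of a fine uniform partition to `t` changes the Riemann sum by
`(f t - f (x j)) * h`, which is therefore less than `2` in absolute value. -/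
lemma exists_abs_le (hab : a < b) (hf : IsRiemannIntegral f a b I) :
    ∃ M, 0 ≤ M ∧ ∀ t ∈ Set.Icc a b, |f t| ≤ M := by
  obtain ⟨n, hn, hn1⟩ :=
    ((hf.eventually_abs_uniform_sum_sub_lt hab one_pos).and (eventually_ge_atTop 1)).exists
  set x := uniformNode a b n
  set h := (b - a) / n
  have hh : 0 < h := div_pos (sub_pos.mpr hab) (by exact_mod_cast hn1)
  refine ⟨∑ k ∈ Icc 1 n, |f (x k)| + 2 / h, by positivity, fun t ht => ?_⟩
  obtain ⟨j, hj, htj⟩ := exists_mem_Icc_uniformNode (n := n) hab (by omega) ht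
  have hx : ∀ k ∈ Icc 1 n, x k ∈ Set.Icc (x (k - 1)) (x k) :=
    fun k _ => ⟨uniformNode_mono hab.le (Nat.sub_le k 1), le_rfl⟩
  have hξ : ∀ k ∈ Icc 1 n, Function.update x j t k ∈ Set.Icc (x (k - 1)) (x k) := by
    intro k hk
    rcases eq_or_ne k j with rfl | hkj
    · simpa using htj
    · simpa [hkj] using hx k hk
  have hdiff : ∑ k ∈ Icc 1 n, f (Function.update x j t k) * h - ∑ k ∈ Icc 1 n, f (x k) * h
      = (f t - f (x j)) * h := by
    rw [← sum_sub_distrib, sum_eq_single_of_mem j hj fun k _ hkj => by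
      rw [Function.update_of_ne hkj, sub_self]]
    simp only [Function.update_self]
    ring
  have hclose : |f t - f (x j)| * h < 2 := by
    rw [← abs_of_pos hh, ← abs_mul, ← hdiff]
    have hξI := hn _ hξ
    have hxI := hn _ hx
    rw [abs_lt] at hξI hxI ⊢
    constructor <;> linarith
  calc |f t| ≤ |f (x j)| + |f t - f (x j)| := by
        linarith [abs_sub_abs_le_abs_sub (f t) (f (x j))]
    _ ≤ ∑ k ∈ Icc 1 n, |f (x k)| + 2 / h := by
        gcongr
        · exact single_le_sum (fun k _ => abs_nonneg (f (x k))) hj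
        · exact (le_div_iff₀ hh).mpr hclose.le

end IsRiemannIntegral

lemma abs_sum_mul_sub_sum_Icc_succ_mul_le {g w : ℕ → ℝ} {M h ε : ℝ} {n K : ℕ}
    (hM : 0 ≤ M) (hh : 0 ≤ h) (hε : 0 ≤ ε) (hg : ∀ k ∈ Icc 1 n, |g k| ≤ M)
    (hw : ∀ k ∈ Icc 1 n, |h - w k| ≤ h * ε) :
    |∑ k ∈ Icc 1 n, g k * h - ∑ k ∈ Icc (K + 1) n, g k * w k| ≤ M * h * (K + n * ε) := by
  have htail : Icc (K + 1) n = (Icc 1 n).filter (fun k => ¬ k ≤ K) := by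
    ext k
    simp only [mem_Icc, mem_filter]
    omega
  have hhead : ((Icc 1 n).filter (· ≤ K)).card ≤ K :=
    (card_le_card fun k hk => by simp only [mem_filter, mem_Icc] at hk ⊢; omega).trans
      (Nat.card_Icc 1 K).le
  have htail_card : ((Icc 1 n).filter (fun k => ¬ k ≤ K)).card ≤ n :=
    (card_filter_le _ _).trans (Nat.card_Icc 1 n).le
  rw [← sum_filter_add_sum_filter_not (Icc 1 n) (· ≤ K), htail, add_sub_assoc,
    ← sum_sub_distrib]
  calc _ ≤ ∑ k ∈ (Icc 1 n).filter (· ≤ K), M * h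
        + ∑ k ∈ (Icc 1 n).filter (fun k => ¬ k ≤ K), M * (h * ε) := by
        refine (abs_add_le _ _).trans (add_le_add ?_ ?_) <;>
          refine (abs_sum_le_sum_abs _ _).trans (sum_le_sum fun k hk => ?_) <;>
          replace hk := (mem_filter.mp hk).1
        · rw [abs_mul, abs_of_nonneg hh]
          exact mul_le_mul_of_nonneg_right (hg k hk) hh
        · rw [← mul_sub, abs_mul]
          exact mul_le_mul (hg k hk) (hw k hk) (abs_nonneg _) hM
    _ ≤ K * (M * h) + n * (M * (h * ε)) := by
        simp only [sum_const, nsmul_eq_mul]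
        gcongr
    _ = M * h * (K + n * ε) := by ring

lemma abs_div_sub_div_add_le {c x d ε : ℝ} (hc : 0 ≤ c) (hx : 0 < x) (hd : 0 ≤ d)
    (hdε : d / x ≤ ε) : |c / x - c / (x + d)| ≤ c / x * ε := by
  rw [show c / x - c / (x + d) = c / x * (d / (x + d)) by field_simp; ring,
    abs_of_nonneg (by positivity)]
  gcongr
  exact (div_le_div_of_nonneg_left hd hx (by linarith)).trans hdε

lemma tendsto_zero_of_eventually_abs_le {α : Type*} {l : Filter α} {u w : α → ℝ} (C : ℝ)
    (hw : Tendsto w l (nhds 0)) (h : ∀ ε > 0, ∀ᶠ x in l, |u x| ≤ w x + C * ε) :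
    Tendsto u l (nhds 0) := by
  refine Metric.tendsto_nhds.mpr fun ε hε => ?_
  have hη : 0 < ε / (2 * (|C| + 1)) := by positivity
  have hCη : C * (ε / (2 * (|C| + 1))) ≤ ε / 2 := by
    rw [mul_div_assoc', div_le_div_iff₀ (by positivity) two_pos]
    nlinarith [le_abs_self C]
  filter_upwards [h _ hη, Metric.tendsto_nhds.mp hw (ε / 2) (half_pos hε)] with x hx hwx
  rw [Real.dist_0_eq_abs] at hwx ⊢
  linarith [le_abs_self (w x)]

theorem deleting_Kn_disturbing_mesh_general (f : ℝ → ℝ) (a b I : ℝ) (hab : a < b)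
    (hf : IsRiemannIntegral f a b I)
    (d : ℕ → ℕ → ℝ)
    (hd0 : ∀ n : ℕ, ∀ k ∈ Finset.Icc 1 n, 0 ≤ d n k)
    (hd : ∀ ε > 0, ∃ N : ℕ, ∀ n ≥ N, ∀ k ∈ Finset.Icc 1 n, d n k / n < ε)
    (K : ℕ → ℕ)
    (hK : Tendsto (fun n : ℕ => (K n : ℝ) / n) atTop (nhds 0)) :
    Tendsto (fun n : ℕ =>
      ∑ k ∈ Finset.Icc (K n + 1) n, f (a + (k : ℝ) / n * (b - a)) * ((b - a) / (n + d n k)))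
      atTop (nhds I) := by
  obtain ⟨M, hM0, hM⟩ := hf.exists_abs_le hab
  have hdiff : Tendsto (fun n : ℕ => ∑ k ∈ Icc 1 n, f (uniformNode a b n k) * ((b - a) / n) -
      ∑ k ∈ Icc (K n + 1) n, f (a + (k : ℝ) / n * (b - a)) * ((b - a) / (n + d n k)))
      atTop (nhds 0) := by
    refine tendsto_zero_of_eventually_abs_le (M * (b - a))
      (by simpa using hK.const_mul (M * (b - a))) fun ε hε => ?_
    filter_upwards [eventually_ge_atTop 1, eventually_atTop.mpr (hd ε hε)] with n hn hdn
    have hnR : (0 : ℝ) < n := by exact_mod_cast hn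
    calc _ ≤ M * ((b - a) / n) * (K n + n * ε) :=
          abs_sum_mul_sub_sum_Icc_succ_mul_le hM0 (div_pos (sub_pos.mpr hab) hnR).le hε.le
            (fun k hk => hM _ (uniformNode_mem_Icc hab.le (mem_Icc.mp hk).2))
            (fun k hk => abs_div_sub_div_add_le (sub_pos.mpr hab).le hnR (hd0 n k hk) (hdn k hk).le)
      _ = M * (b - a) * (K n / n) + M * (b - a) * ε := by field_simp
  simpa using (hf.tendsto_uniform_sum hab).sub hdiff

theorem deleting_Kn_disturbing_mesh (f : ℝ → ℝ) (a b I : ℝ) (hab : a < b)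
    (hf : IsRiemannIntegral f a b I)
    (hpos : ∀ x ∈ Set.Icc a b, 0 ≤ f x)
    (d : ℕ → ℕ → ℝ)
    (hd0 : ∀ n : ℕ, ∀ k ∈ Finset.Icc 1 n, 0 ≤ d n k)
    (hd : ∀ ε > 0, ∃ N : ℕ, ∀ n ≥ N, ∀ k ∈ Finset.Icc 1 n, d n k / n < ε)
    (K : ℕ → ℕ) (hKle : ∀ n, K n ≤ n)
    (hK : Tendsto (fun n : ℕ => (K n : ℝ) / n) atTop (nhds 0)) :
    Tendsto (fun n : ℕ =>
      ∑ k ∈ Finset.Icc (K n + 1) n, f (a + (k : ℝ) / n * (b - a)) * ((b - a) / (n + d n k)))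
      atTop (nhds I) :=
  deleting_Kn_disturbing_mesh_general f a b I hab hf d hd0 hd K hK
end

section
/- Let f be positive and Riemann integrable on [0,1] with ln∘f Riemann integrable and nonnegative on [0,1]. Then lim_{n→∞} Π_{k=1}^{n} f(k/n)^{1/(n + k/n)} = exp(∫_0^1 ln f(x) dx). -/
/-! Taking logarithms, the product becomes `∑ log f(k/n) / (n + k/n)`. Since `log f ≥ 0` and
`0 ≤ 1/n - 1/(n + t) ≤ 1/n²` for `t ∈ [0, 1]`, this differs from the right-endpoint Riemann sum
`∑ log f(k/n) / n` by at most that Riemann sum divided by `n`, which tends to `0` because the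
Riemann sums converge to `L = ∫₀¹ log f`. -/

open Filter Finset Real

open Topology

theorem IsRiemannIntegral.tendsto_sum_right_endpoints {g : ℝ → ℝ} {a b I : ℝ} (hab : a < b)
    (h : IsRiemannIntegral g a b I) :
    Tendsto (fun n : ℕ => ∑ k ∈ Icc 1 n, g (a + k * (b - a) / n) * ((b - a) / n))
      atTop (𝓝 I) := by
  rw [Metric.tendsto_atTop]
  intro ε hε
  obtain ⟨δ, hδ, hsum⟩ := h ε hε
  obtain ⟨N, hN⟩ := exists_nat_gt ((b - a) / δ)
  refine ⟨N + 1, fun n hn => ?_⟩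
  have hnR : (0 : ℝ) < n := by norm_cast; omega
  have hmesh : (b - a) / n < δ := by
    rw [div_lt_iff₀ hδ] at hN
    rw [div_lt_iff₀ hnR]
    nlinarith [(Nat.cast_le (α := ℝ)).2 (show N ≤ n by omega)]
  have hstep_pos : 0 < (b - a) / n := div_pos (sub_pos.2 hab) hnR
  have hstep : ∀ k ∈ Icc 1 n,
      a + k * (b - a) / n - (a + ((k - 1 : ℕ) : ℝ) * (b - a) / n) = (b - a) / n := by
    intro k hk
    rw [Nat.cast_sub (mem_Icc.1 hk).1]
    ring
  have hR := hsum n (fun k => a + k * (b - a) / n) (fun k => a + k * (b - a) / n) (by omega)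
    (by simp) (by field_simp; ring) (fun k hk => by linarith [hstep k hk])
    (fun k hk => (hstep k hk).trans_lt hmesh) (fun k hk => ⟨by linarith [hstep k hk], le_rfl⟩)
  rw [dist_eq]
  convert hR using 4 with k hk
  rw [hstep k hk]

theorem div_sub_div_add_le {u x t : ℝ} (hu : 0 ≤ u) (hx : 0 < x) (ht : 0 ≤ t) (ht1 : t ≤ 1) :
    u / x - u / (x + t) ≤ u / x / x := by
  rw [div_sub_div _ _ hx.ne' (by positivity), div_div,
    div_le_div_iff₀ (by positivity) (by positivity)]
  nlinarith [mul_nonneg (mul_nonneg hu ht) hx.le, mul_nonneg hu (sub_nonneg.2 ht1)]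

theorem tendsto_sum_div_add_of_tendsto_sum_div {u t : ℕ → ℕ → ℝ} {L : ℝ}
    (hu : ∀ n, ∀ k ∈ Icc 1 n, 0 ≤ u n k) (ht : ∀ n, ∀ k ∈ Icc 1 n, t n k ∈ Set.Icc 0 1)
    (h : Tendsto (fun n : ℕ => ∑ k ∈ Icc 1 n, u n k / n) atTop (𝓝 L)) :
    Tendsto (fun n : ℕ => ∑ k ∈ Icc 1 n, u n k / (n + t n k)) atTop (𝓝 L) := by
  have hgap : Tendsto (fun n : ℕ => ∑ k ∈ Icc 1 n, u n k / n - ∑ k ∈ Icc 1 n, u n k / (n + t n k))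
      atTop (𝓝 0) := by
    have hbound : Tendsto (fun n : ℕ => (∑ k ∈ Icc 1 n, u n k / n) / n) atTop (𝓝 0) := by
      simpa using h.div_atTop tendsto_natCast_atTop_atTop
    refine tendsto_of_tendsto_of_tendsto_of_le_of_le' tendsto_const_nhds hbound ?_ ?_
    · filter_upwards [eventually_gt_atTop 0] with n hn
      rw [← sum_sub_distrib]
      exact sum_nonneg fun k hk => sub_nonneg.2 <| div_le_div_of_nonneg_left (hu n k hk)
        (Nat.cast_pos.2 hn) (le_add_of_nonneg_right (ht n k hk).1)
    · filter_upwards [eventually_gt_atTop 0] with n hn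
      rw [← sum_sub_distrib, sum_div]
      exact sum_le_sum fun k hk =>
        div_sub_div_add_le (hu n k hk) (Nat.cast_pos.2 hn) (ht n k hk).1 (ht n k hk).2
  simpa using h.sub hgap

theorem geometric_mean_limit_disturbed_general (f : ℝ → ℝ) (L : ℝ)
    (hpos : ∀ x ∈ Set.Icc (0 : ℝ) 1, 0 < f x)
    (hlog : IsRiemannIntegral (fun x => Real.log (f x)) 0 1 L)
    (hlognn : ∀ x ∈ Set.Icc (0 : ℝ) 1, 0 ≤ Real.log (f x)) :
    Tendsto (fun n : ℕ =>
      ∏ k ∈ Finset.Icc 1 n, f ((k : ℝ) / n) ^ ((1 : ℝ) / (n + (k : ℝ) / n)))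
      atTop (nhds (Real.exp L)) := by
  have hmem : ∀ n : ℕ, ∀ k ∈ Icc 1 n, (k : ℝ) / n ∈ Set.Icc (0 : ℝ) 1 := fun n k hk =>
    ⟨by positivity, div_le_one_of_le₀ (by exact_mod_cast (mem_Icc.1 hk).2) n.cast_nonneg⟩
  have hsum := hlog.tendsto_sum_right_endpoints zero_lt_one
  simp only [zero_add, sub_zero, mul_one, ← mul_div_assoc] at hsum
  have hlogprod := tendsto_sum_div_add_of_tendsto_sum_div (fun n k hk => hlognn _ (hmem n k hk))
    hmem hsum
  refine ((continuous_exp.tendsto L).comp hlogprod).congr fun n => ?_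
  simp only [Function.comp_apply, exp_sum]
  refine prod_congr rfl fun k hk => ?_
  rw [rpow_def_of_pos (hpos _ (hmem n k hk)), mul_one_div]

theorem geometric_mean_limit_disturbed (f : ℝ → ℝ) (I L : ℝ)
    (hpos : ∀ x ∈ Set.Icc (0 : ℝ) 1, 0 < f x)
    (hf : IsRiemannIntegral f 0 1 I)
    (hlog : IsRiemannIntegral (fun x => Real.log (f x)) 0 1 L)
    (hlognn : ∀ x ∈ Set.Icc (0 : ℝ) 1, 0 ≤ Real.log (f x)) :
    Tendsto (fun n : ℕ =>
      ∏ k ∈ Finset.Icc 1 n, f ((k : ℝ) / n) ^ ((1 : ℝ) / (n + (k : ℝ) / n)))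
      atTop (nhds (Real.exp L)) :=
  geometric_mean_limit_disturbed_general f L hpos hlog hlognn
end
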